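/- arXiv:1501.02291 — 4 statements merged into one kernel-verified Lean document; each statement's English description precedes it below -/
import Mathlib

section
/- (Proposition 3.1) Define f(u) = (h² + tξ'(u))/c − u for u ∈ [−U, U]. Then the equation f(u) = 0 has a unique solution u* in [−U, U]. Moreover, u* = 0 when h = 0, and u* ∈ (0, U) when h ≠ 0. -/
/-!
Write `f(u) = (h² + tξ'(u))/c - u`. Since `ξ'` is odd and, by `ξ''' ≥ 0`, convex on `[0, 1]`,
`f` is convex on `[0, U]` and satisfies `f(-u) + f(u) = 2 f(0) = 2h²/c`. Stationarity turns
`f(U)` into `-(1 - t) ξ'(U)/c < 0`. A convex function that is negative at `U` vanishes at most once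
on `[0, U]` and stays strictly below `f(0)` on `(0, U]`; reflecting, `f > f(0) ≥ 0` on `[-U, 0)`.
Existence is the intermediate value theorem between `f(0) = h²/c` and `f(U) < 0`.
-/

open Set

theorem Function.Even.deriv {𝕜 F : Type*} [NontriviallyNormedField 𝕜] [NormedAddCommGroup F]
    [NormedSpace 𝕜 F] {f : 𝕜 → F} (hf : f.Even) : (deriv f).Odd := fun x => by
  have h := deriv_comp_neg f x
  rw [show (fun x => f (-x)) = f from funext hf] at h
  rw [h, neg_neg]

theorem convexOn_deriv_of_deriv3_nonneg {f : ℝ → ℝ} {S : Set ℝ} (hS : Convex ℝ S)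
    (hf : ContDiff ℝ 3 f) (hf3 : ∀ x ∈ interior S, 0 ≤ deriv (deriv (deriv f)) x) :
    ConvexOn ℝ S (deriv f) :=
  have hf' : ContDiff ℝ (1 + 1) (deriv f) := hf.deriv'
  convexOn_of_deriv2_nonneg hS hf'.continuous.continuousOn
    (hf'.differentiable (by norm_num)).differentiableOn
    (hf'.deriv'.differentiable (by norm_num)).differentiableOn hf3

namespace ConvexOn

variable {f : ℝ → ℝ}

theorem lt_left_of_right_lt_of_mem_Ioc {a b : ℝ} (hf : ConvexOn ℝ (Icc a b) f) (hfb : f b < f a)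
    {x : ℝ} (hx : x ∈ Ioc a b) : f x < f a :=
  have hab : a ≤ b := hx.1.le.trans hx.2
  lt_of_not_ge fun hax => (hfb.trans_le (hax.trans
    (hf.le_right_of_left_le'' (left_mem_Icc.2 hab) (right_mem_Icc.2 hab) hx.1 hx.2 hax))).false

theorem eq_of_eq_zero_of_right_neg {a b : ℝ} (hf : ConvexOn ℝ (Icc a b) f) (hfb : f b < 0)
    {x y : ℝ} (hx : x ∈ Icc a b) (hy : y ∈ Icc a b) (hfx : f x = 0) (hfy : f y = 0) : x = y := by
  have not_lt_of_zeros : ∀ x ∈ Icc a b, ∀ y ∈ Icc a b, f x = 0 → f y = 0 → ¬x < y :=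
    fun x hx y hy hfx hfy hxy => by
      have := hf.le_right_of_left_le'' hx (right_mem_Icc.2 (hx.1.trans hx.2)) hxy hy.2
        (hfx.trans hfy.symm).le
      linarith
  exact le_antisymm (not_lt.1 (not_lt_of_zeros y hy x hx hfy hfx))
    (not_lt.1 (not_lt_of_zeros x hx y hy hfx hfy))

variable {U : ℝ}

theorem nonneg_of_eq_zero_of_add_neg (hf : ConvexOn ℝ (Icc 0 U) f) (hfU : f U < 0)
    (hf0 : 0 ≤ f 0) (hsymm : ∀ v, f (-v) + f v = 2 * f 0) {x : ℝ} (hx : x ∈ Icc (-U) U)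
    (hfx : f x = 0) : 0 ≤ x := by
  by_contra! hneg
  have := hf.lt_left_of_right_lt_of_mem_Ioc (hfU.trans_le hf0) (x := -x)
    ⟨neg_pos.2 hneg, neg_le.1 hx.1⟩
  linarith [hsymm x]

theorem exists_unique_zero_of_add_neg (hU : 0 < U) (hcont : ContinuousOn f (Icc 0 U))
    (hf : ConvexOn ℝ (Icc 0 U) f) (hfU : f U < 0) (hf0 : 0 ≤ f 0)
    (hsymm : ∀ v, f (-v) + f v = 2 * f 0) :
    ∃ u ∈ Icc (-U) U, f u = 0 ∧ (∀ v ∈ Icc (-U) U, f v = 0 → v = u) ∧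
      (f 0 = 0 → u = 0) ∧ (0 < f 0 → u ∈ Ioo 0 U) := by
  have hzero_mem : (0 : ℝ) ∈ Icc (-U) U := ⟨by linarith, hU.le⟩
  have huniq : ∀ u ∈ Icc (-U) U, ∀ v ∈ Icc (-U) U, f u = 0 → f v = 0 → u = v :=
    fun u hu v hv hfu hfv => hf.eq_of_eq_zero_of_right_neg hfU
      ⟨hf.nonneg_of_eq_zero_of_add_neg hfU hf0 hsymm hu hfu, hu.2⟩
      ⟨hf.nonneg_of_eq_zero_of_add_neg hfU hf0 hsymm hv hfv, hv.2⟩ hfu hfv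
  obtain ⟨u, hu, hfu, hpos⟩ : ∃ u ∈ Icc (-U) U, f u = 0 ∧ (0 < f 0 → u ∈ Ioo 0 U) := by
    rcases hf0.eq_or_lt with h0 | h0
    · exact ⟨0, hzero_mem, h0.symm, fun h0' => (h0'.ne h0).elim⟩
    · obtain ⟨u, hu, hfu⟩ := intermediate_value_Ioo' hU.le hcont ⟨hfU, h0⟩
      exact ⟨u, ⟨by linarith [hu.1], hu.2.le⟩, hfu, fun _ => hu⟩
  exact ⟨u, hu, hfu, fun v hv hfv => huniq v hv u hu hfv hfu,
    fun h0 => huniq u hu 0 hzero_mem hfu h0, hpos⟩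

end ConvexOn

/-- The function `f` of the paper, with `D = ξ'`. -/
noncomputable def chaosResidual (D : ℝ → ℝ) (h t c u : ℝ) : ℝ :=
  (h ^ 2 + t * D u) / c - u

section chaosResidual

variable {D : ℝ → ℝ} {h t c : ℝ}

theorem chaosResidual_zero (hD : D 0 = 0) : chaosResidual D h t c 0 = h ^ 2 / c := by
  simp [chaosResidual, hD]

theorem chaosResidual_neg_add (hD : D.Odd) (u : ℝ) :
    chaosResidual D h t c (-u) + chaosResidual D h t c u = 2 * chaosResidual D h t c 0 := by
  simp only [chaosResidual, hD u, hD.map_zero]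
  ring

theorem continuous_chaosResidual (hD : Continuous D) : Continuous (chaosResidual D h t c) := by
  unfold chaosResidual
  fun_prop

theorem convexOn_chaosResidual {s : Set ℝ} (hs : Convex ℝ s) (hD : ConvexOn ℝ s D) (ht : 0 ≤ t)
    (hc : 0 ≤ c) : ConvexOn ℝ s (chaosResidual D h t c) := by
  refine (((hD.smul (div_nonneg ht hc)).add_const (h ^ 2 / c)).sub (concaveOn_id hs)).congr
    fun u _ => ?_
  simp only [chaosResidual, Pi.add_apply, Pi.sub_apply, id, smul_eq_mul]
  ring

theorem chaosResidual_neg_of_stationary {U : ℝ} (hstat : (h ^ 2 + D U) / c = U) (ht : t < 1)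
    (hc : 0 < c) (hDU : 0 < D U) : chaosResidual D h t c U < 0 := by
  have hfU : chaosResidual D h t c U = (t - 1) * D U / c := by
    rw [chaosResidual]
    nth_rewrite 2 [← hstat]
    ring
  rw [hfU]
  exact div_neg_of_neg_of_pos (mul_neg_of_neg_of_pos (by linarith) hDU) hc

end chaosResidual

/-- Proposition 3.1: the equation `f(u) = (h² + tξ'(u))/c - u = 0` has a unique
solution `u*` in `[-U, U]`; moreover `u* = 0` if `h = 0` and `u* ∈ (0, U)` if `h ≠ 0`. -/
theorem unique_root_of_chaos_equation
    (ξ : ℝ → ℝ) (h t c U : ℝ)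
    (hξ_even : ∀ s, ξ (-s) = ξ s)
    (hξ_smooth : ContDiff ℝ 3 ξ)
    (hξ'' : ∀ s ∈ Set.Ioc (0:ℝ) 1, 0 < deriv (deriv ξ) s)
    (hξ''' : ∀ s ∈ Set.Icc (0:ℝ) 1, 0 ≤ deriv (deriv (deriv ξ)) s)
    (ht : t ∈ Set.Ioo (0:ℝ) 1)
    (hc : 0 < c)
    (hU : U ∈ Set.Icc (0:ℝ) 1)
    (hstat : (h ^ 2 + deriv ξ U) / c = U) :
    ∃ ustar ∈ Set.Icc (-U) U,
      (h ^ 2 + t * deriv ξ ustar) / c - ustar = 0 ∧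
      (∀ u ∈ Set.Icc (-U) U, (h ^ 2 + t * deriv ξ u) / c - u = 0 → u = ustar) ∧
      (h = 0 → ustar = 0) ∧
      (h ≠ 0 → ustar ∈ Set.Ioo 0 U) := by
  have hodd : (deriv ξ).Odd := Function.Even.deriv hξ_even
  have hf0 := chaosResidual_zero (h := h) (t := t) (c := c) hodd.map_zero
  rcases hU.1.eq_or_lt with rfl | hUpos
  · have hh : h = 0 := by simpa [hodd.map_zero, hc.ne'] using hstat
    refine ⟨0, ⟨by norm_num, le_rfl⟩, by simp [hodd.map_zero, hh], fun u hu _ => ?_,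
      fun _ => rfl, fun hh' => (hh' hh).elim⟩
    exact le_antisymm hu.2 (by simpa using hu.1)
  have hDU : 0 < deriv ξ U := hodd.map_zero ▸ strictMonoOn_of_deriv_pos (convex_Icc 0 1)
    (hξ_smooth.continuous_deriv (by norm_num)).continuousOn
    (fun x hx => hξ'' x (Ioo_subset_Ioc_self (by rwa [interior_Icc] at hx)))
    ⟨le_rfl, zero_le_one⟩ hU hUpos
  have hDconv : ConvexOn ℝ (Icc 0 U) (deriv ξ) :=
    (convexOn_deriv_of_deriv3_nonneg (convex_Icc 0 1) hξ_smooth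
      fun x hx => hξ''' x (Ioo_subset_Icc_self (by rwa [interior_Icc] at hx))).subset
      (Icc_subset_Icc_right hU.2) (convex_Icc 0 U)
  obtain ⟨u, hu, hfu, huniq, hzero, hpos⟩ := ConvexOn.exists_unique_zero_of_add_neg hUpos
    (continuous_chaosResidual (hξ_smooth.continuous_deriv (by norm_num))).continuousOn
    (convexOn_chaosResidual (convex_Icc 0 U) hDconv ht.1.le hc.le)
    (chaosResidual_neg_of_stationary hstat ht.2 hc hDU) (hf0 ▸ by positivity)
    (chaosResidual_neg_add hodd)
  exact ⟨u, hu, hfu, huniq, fun hh => hzero (by rw [hf0, hh]; simp),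
    fun hh => hpos (hf0 ▸ by positivity)⟩
end

section
/- For every u ∈ [−1,1] with |u| ≤ u_x one has 𝒫_u(x,b,0) = 2𝒫(x,b). (At λ = 0 and constrained overlaps inside [−u_x,u_x], the two-dimensional Guerra bound equals twice the Crisanti–Sommers functional.) -/
open MeasureTheory Real Set

/-- Second derivative of `ξ`. -/
noncomputable def xi2 (ξ : ℝ → ℝ) : ℝ → ℝ := deriv (deriv ξ)

/-- `d(q) = ∫_q^1 ξ''(s) x(s) ds`. -/
noncomputable def dFun (ξ x : ℝ → ℝ) (q : ℝ) : ℝ := ∫ s in q..1, xi2 ξ s * x s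

/-- `φ_u(q) = d(u) + ((1-t)/(1+t))(d(q) - d(u))`. -/
noncomputable def phiFun (ξ x : ℝ → ℝ) (t u q : ℝ) : ℝ :=
  dFun ξ x u + (1 - t) / (1 + t) * (dFun ξ x q - dFun ξ x u)

/-- The functional `T_u(x,b,λ)` of Proposition 2.1. -/
noncomputable def TFun (ξ x : ℝ → ℝ) (t b u lam : ℝ) : ℝ :=
  let η : ℝ := if 0 ≤ u then 1 else -1
  (1 / 2) * Real.log (b ^ 2 / (b ^ 2 - lam ^ 2))
    + (1 + t) / 2 * (∫ s in (0:ℝ)..|u|, xi2 ξ s / (b - η * lam - dFun ξ x s))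
    + (1 - t) / 2 * (∫ s in (0:ℝ)..|u|, xi2 ξ s / (b + η * lam - phiFun ξ x t |u| s))
    + (1 / 2) * (∫ s in |u|..(1:ℝ), xi2 ξ s / (b - lam - dFun ξ x s))
    + (1 / 2) * (∫ s in |u|..(1:ℝ), xi2 ξ s / (b + lam - dFun ξ x s))
    - lam * u + b - 1 - Real.log b - ∫ q in (0:ℝ)..1, xi2 ξ q * x q

/-- The two-dimensional Guerra functional `𝒫_u(x,b,λ)`. -/
noncomputable def GuerraP (ξ x : ℝ → ℝ) (t h b u lam : ℝ) : ℝ :=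
  if 0 ≤ u then TFun ξ x t b u lam + h ^ 2 / (b - lam - dFun ξ x 0)
  else TFun ξ x t b u lam + h ^ 2 / (b - lam - phiFun ξ x t |u| 0)

/-- The Crisanti–Sommers functional `𝒫(x,b)`. -/
noncomputable def CSFun (ξ x : ℝ → ℝ) (h b : ℝ) : ℝ :=
  (1 / 2) * (h ^ 2 / (b - dFun ξ x 0)
    + (∫ q in (0:ℝ)..1, xi2 ξ q / (b - dFun ξ x q))
    + b - 1 - Real.log b - ∫ q in (0:ℝ)..1, xi2 ξ q * x q)

/-!
Because `x` vanishes below `u_x`, the function `d` is constant on `[0, u_x]`. Hence for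
`|u| ≤ u_x` the function `φ_{|u|}` agrees with `d` on `[0, |u|]`, the two integrals over
`[0, |u|]` in `T_u` merge (their weights `(1 + t)/2` and `(1 - t)/2` add up to `1`) and join
the integral over `[|u|, 1]`, while at `λ = 0` the logarithmic term vanishes. Splitting
`∫₀¹ ξ''/(b - d)` at `|u|` is legitimate since `ξ''/(b - d)` is continuous on `[0, 1]`:
`ξ'' x ≥ 0` there, so `d ≤ d(0) < b`.
-/

open intervalIntegral

lemma continuous_xi2 {ξ : ℝ → ℝ} (hξ : ContDiff ℝ 3 ξ) : Continuous (xi2 ξ) := by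
  have h : ContDiff ℝ (2 + 1) ξ := hξ
  exact (contDiff_succ_iff_deriv.mp h).2.2.continuous_deriv (by norm_num)

section dFun

variable {ξ x : ℝ → ℝ}

lemma phiFun_eq_dFun {t u q : ℝ} (h : dFun ξ x q = dFun ξ x u) :
    phiFun ξ x t u q = dFun ξ x q := by
  rw [phiFun, h]
  ring

lemma intervalIntegrable_xi2_mul (hξ : Continuous (xi2 ξ)) (hx : MonotoneOn x (Icc 0 1))
    {a c : ℝ} (ha : a ∈ Icc (0:ℝ) 1) (hc : c ∈ Icc (0:ℝ) 1) :
    IntervalIntegrable (fun s => xi2 ξ s * x s) volume a c :=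
  (hx.mono (uIcc_subset_Icc ha hc)).intervalIntegrable.continuousOn_mul hξ.continuousOn

lemma dFun_eq_add_integral {a c : ℝ}
    (hac : IntervalIntegrable (fun s => xi2 ξ s * x s) volume a c)
    (hc : IntervalIntegrable (fun s => xi2 ξ s * x s) volume c 1) :
    dFun ξ x a = (∫ s in a..c, xi2 ξ s * x s) + dFun ξ x c :=
  (integral_add_adjacent_intervals hac hc).symm

lemma dFun_eq_of_forall_eq_zero {a c : ℝ} (hle : a ≤ c) (hx : ∀ q ∈ Ioo a c, x q = 0)
    (hac : IntervalIntegrable (fun s => xi2 ξ s * x s) volume a c)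
    (hc : IntervalIntegrable (fun s => xi2 ξ s * x s) volume c 1) :
    dFun ξ x a = dFun ξ x c := by
  have hzero : ∫ s in a..c, xi2 ξ s * x s = 0 := by
    rw [integral_of_le hle, integral_Ioc_eq_integral_Ioo]
    exact setIntegral_eq_zero_of_forall_eq_zero fun q hq => by rw [hx q hq, mul_zero]
  rw [dFun_eq_add_integral hac hc, hzero, zero_add]

lemma dFun_le_of_nonneg {a c : ℝ} (hle : a ≤ c) (hξ : ∀ s ∈ Ioc a c, 0 ≤ xi2 ξ s)
    (hx : ∀ s ∈ Ioc a c, 0 ≤ x s)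
    (hac : IntervalIntegrable (fun s => xi2 ξ s * x s) volume a c)
    (hc : IntervalIntegrable (fun s => xi2 ξ s * x s) volume c 1) :
    dFun ξ x c ≤ dFun ξ x a := by
  have hnonneg : 0 ≤ ∫ s in a..c, xi2 ξ s * x s := by
    rw [integral_of_le hle]
    exact setIntegral_nonneg measurableSet_Ioc fun s hs => mul_nonneg (hξ s hs) (hx s hs)
  rw [dFun_eq_add_integral hac hc]
  linarith

lemma continuousOn_dFun (h : IntervalIntegrable (fun s => xi2 ξ s * x s) volume 0 1) :
    ContinuousOn (dFun ξ x) (Icc 0 1) := by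
  have h' := (intervalIntegrable_iff_integrableOn_Icc_of_le zero_le_one).mp h
  rw [← uIcc_of_le zero_le_one] at h' ⊢
  exact continuousOn_primitive_interval_left h'

lemma intervalIntegrable_xi2_div {b : ℝ} (hξ : Continuous (xi2 ξ))
    (hd : ContinuousOn (dFun ξ x) (Icc 0 1)) (hb : ∀ s ∈ Icc (0:ℝ) 1, dFun ξ x s < b)
    {a c : ℝ} (ha : a ∈ Icc (0:ℝ) 1) (hc : c ∈ Icc (0:ℝ) 1) :
    IntervalIntegrable (fun s => xi2 ξ s / (b - dFun ξ x s)) volume a c := by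
  refine ContinuousOn.intervalIntegrable ?_
  refine (hξ.continuousOn.div (continuousOn_const.sub hd) fun s hs => ?_).mono
    (uIcc_subset_Icc ha hc)
  exact (sub_pos.mpr (hb s hs)).ne'

lemma TFun_zero_eq {t b u : ℝ}
    (hφ : EqOn (phiFun ξ x t |u|) (dFun ξ x) (Icc 0 |u|))
    (h₀ : IntervalIntegrable (fun s => xi2 ξ s / (b - dFun ξ x s)) volume 0 |u|)
    (h₁ : IntervalIntegrable (fun s => xi2 ξ s / (b - dFun ξ x s)) volume |u| 1) :
    TFun ξ x t b u 0 = (∫ s in (0:ℝ)..1, xi2 ξ s / (b - dFun ξ x s))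
      + b - 1 - Real.log b - ∫ q in (0:ℝ)..1, xi2 ξ q * x q := by
  have hlog : Real.log (b ^ 2 / (b ^ 2 - 0 ^ 2)) = 0 := by
    rcases eq_or_ne b 0 with rfl | hb <;> simp [*]
  have hφint : ∫ s in (0:ℝ)..|u|, xi2 ξ s / (b - phiFun ξ x t |u| s)
      = ∫ s in (0:ℝ)..|u|, xi2 ξ s / (b - dFun ξ x s) :=
    integral_congr fun s hs => by rw [hφ (uIcc_of_le (abs_nonneg u) ▸ hs)]
  rw [← integral_add_adjacent_intervals h₀ h₁]
  simp only [TFun, mul_zero, add_zero, sub_zero]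
  rw [hlog, hφint]
  ring

end dFun

theorem guerra_eq_twice_CS_inside_general
    (ξ x : ℝ → ℝ) (h t b ux : ℝ)
    (hξ_smooth : ContDiff ℝ 3 ξ)
    (hξ'' : ∀ s ∈ Set.Ioc (0:ℝ) 1, 0 < xi2 ξ s)
    (hx_mono : MonotoneOn x (Set.Icc 0 1))
    (hx_mem : ∀ q ∈ Set.Icc (0:ℝ) 1, x q ∈ Set.Icc (0:ℝ) 1)
    (hux_lower : ∀ q ∈ Set.Ico (0:ℝ) ux, x q = 0)
    (hb : max 1 (∫ s in (0:ℝ)..1, xi2 ξ s * x s) < b) :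
    ∀ u ∈ Set.Icc (-1:ℝ) 1, |u| ≤ ux →
      GuerraP ξ x t h b u 0 = 2 * CSFun ξ x h b := by
  intro u hu hux
  have hξc := continuous_xi2 hξ_smooth
  have h0I : (0:ℝ) ∈ Icc (0:ℝ) 1 := ⟨le_rfl, zero_le_one⟩
  have h1I : (1:ℝ) ∈ Icc (0:ℝ) 1 := ⟨zero_le_one, le_rfl⟩
  have huI : |u| ∈ Icc (0:ℝ) 1 := ⟨abs_nonneg u, abs_le.mpr hu⟩
  have hf {a c : ℝ} := intervalIntegrable_xi2_mul (a := a) (c := c) hξc hx_mono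
  have hd_lt : ∀ s ∈ Icc (0:ℝ) 1, dFun ξ x s < b := fun s hs =>
    (dFun_le_of_nonneg hs.1 (fun r hr => (hξ'' r ⟨hr.1, hr.2.trans hs.2⟩).le)
      (fun r hr => (hx_mem r ⟨hr.1.le, hr.2.trans hs.2⟩).1) (hf h0I hs) (hf hs h1I)).trans_lt
      ((le_max_right _ _).trans_lt hb)
  have hG {a c : ℝ} := intervalIntegrable_xi2_div (a := a) (c := c) hξc
    (continuousOn_dFun (hf h0I h1I)) hd_lt
  have hφ : EqOn (phiFun ξ x t |u|) (dFun ξ x) (Icc 0 |u|) := fun s hs =>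
    phiFun_eq_dFun <| dFun_eq_of_forall_eq_zero hs.2
      (fun q hq => hux_lower q ⟨hs.1.trans hq.1.le, hq.2.trans_le hux⟩)
      (hf ⟨hs.1, hs.2.trans huI.2⟩ huI) (hf huI h1I)
  have hT := TFun_zero_eq hφ (hG h0I huI) (hG huI h1I)
  unfold GuerraP CSFun
  split_ifs
  · rw [hT, sub_zero]; ring
  · rw [hT, sub_zero, hφ ⟨le_rfl, huI.1⟩]; ring

/-- At `λ = 0`, for constrained overlaps inside `[-u_x, u_x]`, the Guerra bound
equals twice the Crisanti–Sommers functional. -/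
theorem guerra_eq_twice_CS_inside
    (ξ x : ℝ → ℝ) (h t b ux : ℝ)
    (hξ_even : ∀ s, ξ (-s) = ξ s)
    (hξ_smooth : ContDiff ℝ 3 ξ)
    (hξ'' : ∀ s ∈ Set.Ioc (0:ℝ) 1, 0 < xi2 ξ s)
    (hξ''' : ∀ s ∈ Set.Icc (0:ℝ) 1, 0 ≤ deriv (xi2 ξ) s)
    (hx_mono : MonotoneOn x (Set.Icc 0 1))
    (hx_mem : ∀ q ∈ Set.Icc (0:ℝ) 1, x q ∈ Set.Icc (0:ℝ) 1)
    (hx_rc : ∀ q ∈ Set.Ico (0:ℝ) 1, ContinuousWithinAt x (Set.Ici q) q)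
    (hx_one : x 1 = 1)
    (hux_mem : ux ∈ Set.Icc (0:ℝ) 1)
    (hux_lower : ∀ q ∈ Set.Ico (0:ℝ) ux, x q = 0)
    (hux_upper : ∀ q ∈ Set.Ioc ux 1, 0 < x q)
    (ht : t ∈ Set.Ioo (0:ℝ) 1)
    (hb : max 1 (∫ s in (0:ℝ)..1, xi2 ξ s * x s) < b) :
    ∀ u ∈ Set.Icc (-1:ℝ) 1, |u| ≤ ux →
      GuerraP ξ x t h b u 0 = 2 * CSFun ξ x h b :=
  guerra_eq_twice_CS_inside_general ξ x h t b ux hξ_smooth hξ'' hx_mono hx_mem hux_lower hb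
end

section
/- For every b > 0, every λ ∈ ℝ with |λ| < b, and all x¹, x² ∈ ℝ, one has ∫∫ exp(x¹σ¹ + x²σ² + λσ¹σ²) dν^b(σ¹) dν^b(σ²) = √(b²/(b² − λ²)) · exp( (x¹ + x²)²/(4(b − λ)) + (x¹ − x²)²/(4(b + λ)) ), where ν^b is the centered Gaussian measure on ℝ with variance 1/b. (This is the rotation/change-of-variables identity at the heart of Lemma 2.2.) -/
/-!
Integrate out `σ²` first: `∫ exp (t σ) dν^b(σ) = exp (t² / (2b))`, here with `t = x² + λσ¹`.
What remains in `σ¹` is `exp (λ² (σ¹)² / (2b) + (linear in σ¹))`, whose quadratic coefficient is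
below `b / 2` because `λ² < b²`; multiplied by the density of `ν^b` it is again a Gaussian,
integrated by completing the square.
-/

open MeasureTheory ProbabilityTheory Real

theorem integral_exp_neg_mul_sq_add_mul {a : ℝ} (ha : 0 < a) (c : ℝ) :
    ∫ x, exp (-a * x ^ 2 + c * x) = √(π / a) * exp (c ^ 2 / (4 * a)) := by
  have hsquare : ∀ x, exp (-a * x ^ 2 + c * x)
      = exp (c ^ 2 / (4 * a)) * exp (-a * (x - c / (2 * a)) ^ 2) := fun x ↦ by
    rw [← exp_add]; congr 1; field_simp; ring
  simp_rw [hsquare]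
  rw [integral_const_mul, integral_sub_right_eq_self (fun x ↦ exp (-a * x ^ 2)),
    integral_gaussian, mul_comm]

theorem integral_exp_mul_gaussianReal (μ : ℝ) (v : NNReal) (t : ℝ) :
    ∫ x, exp (t * x) ∂(gaussianReal μ v) = exp (μ * t + v * t ^ 2 / 2) :=
  congrFun (mgf_id_gaussianReal (μ := μ) (v := v)) t

theorem integral_exp_quadratic_gaussianReal_inv {b : ℝ} (hb : 0 < b) {β : ℝ} (hβ : 2 * β < b)
    (c d : ℝ) :
    ∫ x, exp (β * x ^ 2 + c * x + d) ∂(gaussianReal 0 (Real.toNNReal b⁻¹))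
      = √(b / (b - 2 * β)) * exp (c ^ 2 / (2 * (b - 2 * β)) + d) := by
  have hv : ((Real.toNNReal b⁻¹ : NNReal) : ℝ) = b⁻¹ := Real.coe_toNNReal _ (by positivity)
  have hdensity : ∀ x, gaussianPDFReal 0 (Real.toNNReal b⁻¹) x • exp (β * x ^ 2 + c * x + d)
      = (√(2 * π / b))⁻¹ * exp d * exp (-((b - 2 * β) / 2) * x ^ 2 + c * x) := fun x ↦ by
    simp only [gaussianPDFReal_def, hv, smul_eq_mul, mul_assoc, ← exp_add]
    congr 2
    · rw [mul_div_assoc, div_eq_mul_inv]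
    · field_simp
      ring
  rw [integral_gaussianReal_eq_integral_smul (by simpa using hb)]
  simp_rw [hdensity]
  rw [integral_const_mul, integral_exp_neg_mul_sq_add_mul (by linarith), exp_add]
  have hsqrt : (√(2 * π / b))⁻¹ * √(π / ((b - 2 * β) / 2)) = √(b / (b - 2 * β)) := by
    rw [← sqrt_inv, ← sqrt_mul (by positivity)]
    congr 1
    field_simp
  have hexp : c ^ 2 / (4 * ((b - 2 * β) / 2)) = c ^ 2 / (2 * (b - 2 * β)) := by ring
  rw [← hsqrt, hexp]
  ring

/-- Rotation identity for the coupled Gaussian integral (heart of Lemma 2.2):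
`∫∫ exp(x¹σ¹ + x²σ² + λσ¹σ²) dν^b(σ¹) dν^b(σ²)
  = √(b²/(b² - λ²)) · exp((x¹+x²)²/(4(b-λ)) + (x¹-x²)²/(4(b+λ)))`,
where `ν^b` is the centered Gaussian measure of variance `1/b`. -/
theorem coupled_gaussian_integral (b lam x1 x2 : ℝ) (hb : 0 < b) (hlam : |lam| < b) :
    (∫ σ1, ∫ σ2, Real.exp (x1 * σ1 + x2 * σ2 + lam * σ1 * σ2)
        ∂(gaussianReal 0 (Real.toNNReal b⁻¹)) ∂(gaussianReal 0 (Real.toNNReal b⁻¹)))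
      = Real.sqrt (b ^ 2 / (b ^ 2 - lam ^ 2)) *
        Real.exp ((x1 + x2) ^ 2 / (4 * (b - lam)) + (x1 - x2) ^ 2 / (4 * (b + lam))) := by
  obtain ⟨hlam_lo, hlam_hi⟩ := abs_lt.mp hlam
  have hv : ((Real.toNNReal b⁻¹ : NNReal) : ℝ) = b⁻¹ := Real.coe_toNNReal _ (by positivity)
  have hinner : ∀ σ1, ∫ σ2, exp (x1 * σ1 + x2 * σ2 + lam * σ1 * σ2)
        ∂(gaussianReal 0 (Real.toNNReal b⁻¹))
      = exp (lam ^ 2 / (2 * b) * σ1 ^ 2 + (x1 + lam * x2 / b) * σ1 + x2 ^ 2 / (2 * b)) :=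
    fun σ1 ↦ by
      have hsplit : ∀ σ2, exp (x1 * σ1 + x2 * σ2 + lam * σ1 * σ2)
          = exp (x1 * σ1) * exp ((x2 + lam * σ1) * σ2) := fun σ2 ↦ by
        rw [← exp_add]; congr 1; ring
      simp_rw [hsplit]
      rw [integral_const_mul, integral_exp_mul_gaussianReal, hv, ← exp_add]
      congr 1
      field_simp
      ring
  simp_rw [hinner]
  rw [integral_exp_quadratic_gaussianReal_inv hb (by field_simp; nlinarith)]
  have hdet : b - 2 * (lam ^ 2 / (2 * b)) = (b ^ 2 - lam ^ 2) / b := by field_simp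
  have hb_add : b + lam ≠ 0 := by linarith
  have hb_sq : b ^ 2 - lam ^ 2 ≠ 0 := by nlinarith
  rw [hdet]
  congr 2
  · field_simp
  · field_simp
    ring
end

section
/- Let m ∈ ℕ, let v_0, …, v_m ≥ 0 and n_0, …, n_m > 0 be real numbers, and let c ∈ ℝ satisfy c > Σ_{ℓ=0}^m n_ℓ v_ℓ. Set d_p = Σ_{ℓ=p}^m n_ℓ v_ℓ for 0 ≤ p ≤ m and d_{m+1} = 0. Define J_{m+1}(y) = y²/(2c) and, recursively for p = m down to 0, J_p(y) = (1/n_p) log ∫_ℝ exp( n_p J_{p+1}(y + √(v_p) z) ) dγ(z), where γ is the standard Gaussian measure on ℝ. Then all these Gaussian integrals are finite, and for every y ∈ ℝ, J_0(y) = y²/(2(c − d_0)) + ½ Σ_{p=0}^m (1/n_p) log( (c − d_{p+1})/(c − d_p) ). (This closed form for the iterated Gaussian recursion is the computation behind equations (2.10)–(2.11) in the proof of Proposition 2.1.) -/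
/-!
Completing the square, the standard Gaussian integral of `exp` of a quadratic `a (y + s z)²`
is again `exp` of a quadratic in `y`, finite as long as `2 a s² < 1`. Hence if
`J_{p+1}(x) = x² / (2k) + K` with `k > n_p v_p`, then
`J_p(y) = y² / (2 (k - n_p v_p)) + K + (1 / (2 n_p)) log (k / (k - n_p v_p))`.
Since `c - d_{p+1} - n_p v_p = c - d_p`, downward induction from `J_{m+1}` with `k = c - d_{p+1}`
gives the closed form; `c > d_0 ≥ d_p` keeps every step convergent.
-/

open MeasureTheory ProbabilityTheory Real Finset

lemma gaussianPDFReal_mul_exp_mul_sq {a s : ℝ} (hB : 1 - 2 * a * s ^ 2 ≠ 0) (y z : ℝ) :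
    gaussianPDFReal 0 1 z * exp (a * (y + s * z) ^ 2) =
      exp (a * y ^ 2 / (1 - 2 * a * s ^ 2)) / √(2 * π) *
        exp (-((1 - 2 * a * s ^ 2) / 2) * (z - 2 * a * s * y / (1 - 2 * a * s ^ 2)) ^ 2) := by
  have hsq : -z ^ 2 / 2 + a * (y + s * z) ^ 2 = a * y ^ 2 / (1 - 2 * a * s ^ 2) +
      -((1 - 2 * a * s ^ 2) / 2) * (z - 2 * a * s * y / (1 - 2 * a * s ^ 2)) ^ 2 := by
    field_simp
    ring
  simp only [gaussianPDFReal, NNReal.coe_one, mul_one, sub_zero]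
  rw [mul_assoc, ← exp_add, hsq, exp_add]
  ring

lemma integrable_gaussianReal_zero_one_iff {f : ℝ → ℝ} :
    Integrable f (gaussianReal 0 1) ↔ Integrable (fun x => gaussianPDFReal 0 1 x * f x) := by
  rw [gaussianReal_of_var_ne_zero 0 one_ne_zero,
    integrable_withDensity_iff_integrable_smul' (measurable_gaussianPDF 0 1)
      (ae_of_all _ fun _ => gaussianPDF_lt_top)]
  simp only [gaussianPDF, ENNReal.toReal_ofReal (gaussianPDFReal_nonneg 0 1 _), smul_eq_mul]

lemma integrable_exp_mul_sq_gaussianReal {a s : ℝ} (h : 2 * a * s ^ 2 < 1) (y : ℝ) :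
    Integrable (fun z => exp (a * (y + s * z) ^ 2)) (gaussianReal 0 1) := by
  have hB : 0 < 1 - 2 * a * s ^ 2 := by linarith
  rw [integrable_gaussianReal_zero_one_iff]
  simp only [gaussianPDFReal_mul_exp_mul_sq hB.ne']
  exact ((integrable_exp_neg_mul_sq (half_pos hB)).comp_sub_right _).const_mul _

lemma integral_exp_mul_sq_gaussianReal {a s : ℝ} (h : 2 * a * s ^ 2 < 1) (y : ℝ) :
    ∫ z, exp (a * (y + s * z) ^ 2) ∂(gaussianReal 0 1) =
      exp (a * y ^ 2 / (1 - 2 * a * s ^ 2)) / √(1 - 2 * a * s ^ 2) := by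
  have hB : 0 < 1 - 2 * a * s ^ 2 := by linarith
  rw [integral_gaussianReal_eq_integral_smul one_ne_zero]
  simp only [smul_eq_mul, gaussianPDFReal_mul_exp_mul_sq hB.ne']
  rw [integral_const_mul, integral_sub_right_eq_self (fun z => exp (-_ * z ^ 2)), integral_gaussian,
    div_div_eq_mul_div, sqrt_div' _ (by positivity)]
  field_simp

lemma gaussian_recursion_step {f : ℝ → ℝ} {n v k K : ℝ} (hn : 0 < n) (hv : 0 ≤ v)
    (hk : n * v < k) (hf : ∀ x, f x = x ^ 2 / (2 * k) + K) (y : ℝ) :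
    Integrable (fun z => exp (n * f (y + √v * z))) (gaussianReal 0 1) ∧
    (1 / n) * log (∫ z, exp (n * f (y + √v * z)) ∂(gaussianReal 0 1)) =
      y ^ 2 / (2 * (k - n * v)) + (1 / 2) * ((1 / n) * log (k / (k - n * v))) + K := by
  have hk₀ : 0 < k := (mul_nonneg hn.le hv).trans_lt hk
  have hkv : 0 < k - n * v := by linarith
  have hq : 0 < (k - n * v) / k := div_pos hkv hk₀
  have hB : 1 - 2 * (n / (2 * k)) * √v ^ 2 = (k - n * v) / k := by
    rw [sq_sqrt hv]; field_simp
  have hs : 2 * (n / (2 * k)) * √v ^ 2 < 1 := by linarith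
  have hfactor (z : ℝ) :
      exp (n * f (y + √v * z)) = exp (n * K) * exp (n / (2 * k) * (y + √v * z) ^ 2) := by
    rw [hf, ← exp_add]; congr 1; field_simp; ring
  simp only [hfactor]
  refine ⟨(integrable_exp_mul_sq_gaussianReal hs y).const_mul _, ?_⟩
  rw [integral_const_mul, integral_exp_mul_sq_gaussianReal hs y, hB,
    log_mul (exp_pos _).ne' (div_pos (exp_pos _) (sqrt_pos.2 hq)).ne',
    log_div (exp_pos _).ne' (sqrt_pos.2 hq).ne', log_exp, log_exp, log_sqrt hq.le,
    log_div hkv.ne' hk₀.ne', log_div hk₀.ne' hkv.ne']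
  field_simp
  ring

/-- Closed form for the iterated Gaussian recursion behind (2.10)-(2.11) in the
proof of Proposition 2.1: with `J_{m+1}(y) = y²/(2c)` and
`J_p(y) = (1/n_p) log ∫ exp(n_p J_{p+1}(y + √(v_p) z)) dγ(z)`, all the Gaussian
integrals are finite and
`J_0(y) = y²/(2(c - d_0)) + ½ Σ_{p=0}^m (1/n_p) log((c - d_{p+1})/(c - d_p))`,
where `d_p = Σ_{ℓ=p}^m n_ℓ v_ℓ`. -/
theorem iterated_gaussian_recursion (m : ℕ) (v n : ℕ → ℝ) (c : ℝ) (J : ℕ → ℝ → ℝ)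
    (hv : ∀ ℓ ≤ m, 0 ≤ v ℓ) (hn : ∀ ℓ ≤ m, 0 < n ℓ)
    (hc : ∑ ℓ ∈ Finset.range (m + 1), n ℓ * v ℓ < c)
    (hJtop : ∀ y, J (m + 1) y = y ^ 2 / (2 * c))
    (hJrec : ∀ p ≤ m, ∀ y : ℝ, J p y =
      (1 / n p) * Real.log (∫ z, Real.exp (n p * J (p + 1) (y + Real.sqrt (v p) * z))
        ∂(gaussianReal 0 1))) :
    (∀ p ≤ m, ∀ y : ℝ,
      Integrable (fun z => Real.exp (n p * J (p + 1) (y + Real.sqrt (v p) * z)))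
        (gaussianReal 0 1)) ∧
    (∀ y : ℝ, J 0 y =
      y ^ 2 / (2 * (c - ∑ ℓ ∈ Finset.Icc 0 m, n ℓ * v ℓ)) +
      (1 / 2) * ∑ p ∈ Finset.range (m + 1), (1 / n p) *
        Real.log ((c - ∑ ℓ ∈ Finset.Icc (p + 1) m, n ℓ * v ℓ) /
          (c - ∑ ℓ ∈ Finset.Icc p m, n ℓ * v ℓ))) := by
  let d p := ∑ ℓ ∈ Icc p m, n ℓ * v ℓ
  have hd_succ (p : ℕ) (hp : p ≤ m) : c - d (p + 1) - n p * v p = c - d p := by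
    simp only [d]
    rw [← insert_Icc_add_one_left_eq_Icc hp, sum_insert (by simp)]
    ring
  have hd_lt (p : ℕ) (hp : p ≤ m) : n p * v p < c - d (p + 1) := by
    have hd_le : d p ≤ d 0 := sum_le_sum_of_subset_of_nonneg (Icc_subset_Icc_left p.zero_le)
      fun ℓ hℓ _ => mul_nonneg (hn ℓ (mem_Icc.1 hℓ).2).le (hv ℓ (mem_Icc.1 hℓ).2)
    have hd₀ : d 0 < c := by rwa [Nat.range_succ_eq_Icc_zero] at hc
    linarith [hd_succ p hp]
  have hJ (p : ℕ) (hp : p ≤ m + 1) (y : ℝ) : J p y = y ^ 2 / (2 * (c - d p)) +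
      (1 / 2) * ∑ q ∈ Icc p m, (1 / n q) * log ((c - d (q + 1)) / (c - d q)) := by
    induction hp using Nat.decreasingInduction generalizing y with
    | self => simp [hJtop, d]
    | of_succ p hp ih =>
      have hpm : p ≤ m := Nat.le_of_lt_succ hp
      rw [hJrec p hpm, (gaussian_recursion_step (hn p hpm) (hv p hpm) (hd_lt p hpm) ih y).2,
        hd_succ p hpm, ← insert_Icc_add_one_left_eq_Icc hpm, sum_insert (by simp)]
      ring
  refine ⟨fun p hp y => (gaussian_recursion_step (hn p hp) (hv p hp) (hd_lt p hp)
    (hJ (p + 1) (by omega)) y).1, fun y => ?_⟩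
  rw [hJ 0 m.zero_le.step, Nat.range_succ_eq_Icc_zero]
end
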